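/- arXiv:1502.05727 — 2 statements merged into one kernel-verified Lean document; each statement's English description precedes it below -/
import Mathlib

section
/- Let k be a field of characteristic p > 0 and let G be an elementary abelian p-group of order p^n (i.e. G ≅ (C_p)^n). Then t(G) = n(p-1) + 1. -/
/-!
Let `I` be the augmentation ideal of `k[G]`, `G = (C_p)^n`, and `x_i` the standard generators.
`I` is maximal and generated by the `x_i - 1`, and `(x_i - 1)^p = x_i^p - 1 = 0` in
characteristic `p`; by pigeonhole every product of `n(p-1)+1` generators vanishes, so `I` is
nilpotent, hence `J(k[G]) = I` and `I^(n(p-1)+1) = 0`. Conversely `(X - 1)^(p-1) = ∑_{j<p} X^j`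
in characteristic `p`, so `∏ (x_i - 1)^(p-1) = ∑_{g ∈ G} g`, a nonzero element of
`I^(n(p-1))`.
-/

/-- The Jacobson radical of a ring `R`, as an ideal. -/
noncomputable def jacobsonRad (R : Type*) [Ring R] : Ideal R := (⊥ : Ideal R).jacobson

/-- The nilpotency index of the Jacobson radical of `R`: the least positive
integer `s` with `J(R) ^ s = 0`. -/
noncomputable def nilIndex (R : Type*) [Ring R] : ℕ :=
  sInf {s : ℕ | 0 < s ∧ jacobsonRad R ^ s = ⊥}

open Finset Polynomial MonoidAlgebra

section

variable {R S : Type*} [Ring R] [Ring S]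

theorem Ideal.map_mul_of_ringEquiv (e : R ≃+* S) (I J : Ideal R) :
    (I * J).map e = I.map e * J.map e := by
  refine le_antisymm (map_le_iff_le_comap.2 <| mul_le.2 fun r hr s hs => ?_) (mul_le.2 ?_)
  · rw [mem_comap, map_mul]
    exact mul_mem_mul (mem_map_of_mem e hr) (mem_map_of_mem e hs)
  · intro a ha b hb
    obtain ⟨r, hr, rfl⟩ := (mem_map_iff_of_surjective e e.surjective).1 ha
    obtain ⟨s, hs, rfl⟩ := (mem_map_iff_of_surjective e e.surjective).1 hb
    exact map_mul e r s ▸ mem_map_of_mem e (mul_mem_mul hr hs)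

theorem Ideal.map_pow_of_ringEquiv (e : R ≃+* S) (I : Ideal R) :
    ∀ s : ℕ, (I ^ s).map e = I.map e ^ s
  | 0 => by rw [Submodule.pow_zero, Submodule.pow_zero, one_eq_top, map_top, one_eq_top]
  | s + 1 => by
    rw [Submodule.pow_succ, Submodule.pow_succ, map_mul_of_ringEquiv, map_pow_of_ringEquiv e I s]

theorem nilIndex_congr (e : R ≃+* S) : nilIndex R = nilIndex S := by
  have hJ : (jacobsonRad R).map e = jacobsonRad S := by
    have := Ideal.map_jacobson_of_bijective (f := (e : R →+* S)) e.bijective (I := ⊥)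
    rwa [Ideal.map_bot] at this
  have hpow (s : ℕ) : jacobsonRad R ^ s = ⊥ ↔ jacobsonRad S ^ s = ⊥ := by
    rw [← hJ, ← Ideal.map_pow_of_ringEquiv, Ideal.map_eq_bot_iff_of_injective e.injective]
  simp only [nilIndex, hpow]

theorem nilIndex_eq_succ_of_pow_eq_bot {m : ℕ} (h : jacobsonRad R ^ (m + 1) = ⊥)
    (h' : jacobsonRad R ^ m ≠ ⊥) : nilIndex R = m + 1 := by
  refine (Nat.sInf_upward_closed_eq_succ_iff ?_ m).2 ⟨⟨m.succ_pos, h⟩, fun hm => h' hm.2⟩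
  rintro s₁ s₂ hs ⟨hs₁, hJ⟩
  exact ⟨hs₁.trans_le hs, eq_bot_iff.2 (hJ ▸ Ideal.pow_le_pow_right hs)⟩

end

theorem jacobsonRad_eq_of_isMaximal_of_isNilpotent {R : Type*} [CommRing R] {I : Ideal R}
    (hmax : I.IsMaximal) (hnil : IsNilpotent I) : jacobsonRad R = I := by
  refine le_antisymm (sInf_le ⟨bot_le, hmax⟩) fun x hx => Ideal.radical_le_jacobson ?_
  obtain ⟨N, hN⟩ := hnil
  exact ⟨N, by simpa [hN] using Ideal.pow_mem_pow hx N⟩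

theorem prod_comp_eq_zero_of_pow_eq_zero {M ι α : Type*} [CommMonoidWithZero M]
    [Fintype ι] [DecidableEq ι] {f : ι → M} {m : ℕ} (hf : ∀ i, f i ^ (m + 1) = 0)
    (s : Finset α) (c : α → ι) (hs : Fintype.card ι * m < #s) : ∏ a ∈ s, f (c a) = 0 := by
  obtain ⟨i, -, hi⟩ := exists_lt_card_fiber_of_mul_lt_card_of_maps_to
    (fun a _ => mem_univ (c a)) (by simpa using hs)
  have hi_mem : i ∈ s.image c := by
    obtain ⟨a, ha⟩ := card_pos.1 (m.zero_le.trans_lt hi)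
    exact mem_image.2 ⟨a, (mem_filter.1 ha).1, (mem_filter.1 ha).2⟩
  rw [Finset.prod_comp]
  exact prod_eq_zero hi_mem (pow_eq_zero_of_le hi (hf i))

theorem Ideal.span_range_pow_eq_bot {R ι : Type*} [CommRing R] [Fintype ι] {f : ι → R}
    {m : ℕ} (hf : ∀ i, f i ^ (m + 1) = 0) :
    span (Set.range f) ^ (Fintype.card ι * m + 1) = ⊥ := by
  classical
  rw [Submodule.span_pow, eq_bot_iff, span_le]
  intro a ha
  obtain ⟨w, rfl⟩ := Set.mem_pow.1 ha
  choose c hc using fun j => (w j).2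
  rw [SetLike.mem_coe, mem_bot, List.prod_ofFn, ← Finset.prod_congr rfl fun j _ => hc j]
  exact prod_comp_eq_zero_of_pow_eq_zero hf _ c (by simp)

theorem sub_one_pow_pred_eq_geom_sum {R : Type*} [CommRing R] (p : ℕ) [Fact p.Prime]
    [CharP R p] (x : R) : (x - 1) ^ (p - 1) = ∑ i ∈ range p, x ^ i := by
  have hX : ((X : (ZMod p)[X]) - 1) ^ (p - 1) = ∑ i ∈ range p, X ^ i := by
    refine mul_right_cancel₀ (X_sub_C_ne_zero (1 : ZMod p)) ?_
    rw [C_1, geom_sum_mul, ← pow_succ, Nat.sub_add_cancel (Fact.out : p.Prime).one_le,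
      sub_pow_char, one_pow]
  simpa only [map_pow, map_sub, map_one, map_sum, coe_eval₂RingHom, eval₂_X] using
    congrArg (eval₂RingHom (ZMod.castHom dvd_rfl R) x) hX

namespace MonoidAlgebra

section Augmentation

variable (k G : Type*) [CommRing k] [Monoid G]

noncomputable abbrev augmentationIdeal : Ideal (MonoidAlgebra k G) :=
  RingHom.ker (lift k k G 1)

variable {k G}

theorem sub_algebraMap_lift_one_mem {I : Ideal (MonoidAlgebra k G)}
    (hI : ∀ g, of k G g - 1 ∈ I) (f : MonoidAlgebra k G) :
    f - algebraMap k _ (lift k k G 1 f) ∈ I := by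
  induction f using induction_linear with
  | zero => simp
  | add f₁ f₂ h₁ h₂ => simpa [add_sub_add_comm] using add_mem h₁ h₂
  | single g c =>
    have : single g c - algebraMap k _ (lift k k G 1 (single g c)) = c • (of k G g - 1) := by
      rw [lift_single, MonoidHom.one_apply, smul_sub, of_apply, smul_single', mul_one,
        Algebra.algebraMap_eq_smul_one, smul_eq_mul, mul_one]
    exact this ▸ I.smul_of_tower_mem c (hI g)

theorem augmentationIdeal_le {I : Ideal (MonoidAlgebra k G)} (hI : ∀ g, of k G g - 1 ∈ I) :
    augmentationIdeal k G ≤ I := fun f hf => by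
  simpa [RingHom.mem_ker.1 hf] using sub_algebraMap_lift_one_mem hI f

theorem of_sub_one_mem_augmentationIdeal (g : G) : of k G g - 1 ∈ augmentationIdeal k G := by
  simp

theorem of_sub_one_mem_of_mem_closure {I : Ideal (MonoidAlgebra k G)} {s : Set G}
    (hs : ∀ g ∈ s, of k G g - 1 ∈ I) {g : G} (hg : g ∈ Submonoid.closure s) :
    of k G g - 1 ∈ I := by
  induction hg using Submonoid.closure_induction with
  | mem g hg => exact hs g hg
  | one => simp only [map_one, sub_self, zero_mem]
  | mul g h _ _ hg hh =>
    have : of k G (g * h) - 1 = of k G g * (of k G h - 1) + (of k G g - 1) := by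
      rw [map_mul, mul_sub, mul_one, sub_add_sub_cancel]
    exact this ▸ add_mem (I.mul_mem_left _ hh) hg

theorem sum_of_ne_zero [Fintype G] [Nontrivial k] : ∑ g, of k G g ≠ 0 := by
  intro h
  have := congrArg (fun f : MonoidAlgebra k G => f.coeff 1) h
  simp [coeff_sum, of_apply] at this

end Augmentation

theorem augmentationIdeal_isMaximal (k G : Type*) [Field k] [Monoid G] :
    (augmentationIdeal k G).IsMaximal :=
  RingHom.ker_isMaximal_of_surjective _ fun c => ⟨algebraMap k _ c, AlgHom.commutes _ c⟩

instance charP {k G : Type*} [Field k] [Monoid G] (p : ℕ) [CharP k p] :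
    CharP (MonoidAlgebra k G) p :=
  charP_of_injective_algebraMap' k p

theorem prod_sum_of_mulSingle (k : Type*) [CommRing k] {ι : Type*} [Fintype ι]
    [DecidableEq ι] {M : ι → Type*} [∀ i, CommMonoid (M i)] [∀ i, Fintype (M i)] :
    ∏ i, ∑ a : M i, of k (∀ i, M i) (Pi.mulSingle i a) = ∑ g, of k (∀ i, M i) g := by
  rw [Fintype.prod_sum]
  refine Fintype.sum_congr _ _ fun g => ?_
  rw [← map_prod, univ_prod_mulSingle]

end MonoidAlgebra

theorem ZMod.sum_range_natCast {M : Type*} [AddCommMonoid M] (p : ℕ) [NeZero p]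
    (f : ZMod p → M) : ∑ j ∈ range p, f j = ∑ a, f a :=
  sum_nbij' Nat.cast ZMod.val (fun _ _ => mem_univ _) (fun a _ => mem_range.2 a.val_lt)
    (fun _ hj => ZMod.val_cast_of_lt (mem_range.1 hj)) (fun a _ => ZMod.natCast_zmod_val a)
    fun _ _ => rfl

theorem pi_zmod_pow_eq_one {ι : Type*} (p : ℕ) (g : ι → Multiplicative (ZMod p)) :
    g ^ p = 1 := by
  funext i
  apply Multiplicative.toAdd.injective
  rw [Pi.pow_apply, toAdd_pow, nsmul_eq_mul, ZMod.natCast_self, zero_mul, Pi.one_apply, toAdd_one]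

section ElementaryAbelian

variable (p : ℕ) {ι : Type*} [DecidableEq ι]

local notation "G" => ι → Multiplicative (ZMod p)

def piZModGen (i : ι) : G :=
  Pi.mulSingle i (Multiplicative.ofAdd 1)

theorem piZModGen_pow (i : ι) (m : ℕ) :
    piZModGen p i ^ m = Pi.mulSingle i (Multiplicative.ofAdd (m : ZMod p)) := by
  rw [piZModGen, ← Pi.mulSingle_pow, ← ofAdd_nsmul, nsmul_one]

theorem closure_range_piZModGen [NeZero p] [Fintype ι] :
    Submonoid.closure (Set.range (piZModGen p (ι := ι))) = ⊤ := by
  refine eq_top_iff.2 fun g _ => ?_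
  rw [← univ_prod_mulSingle g]
  refine Submonoid.prod_mem _ fun i _ => ?_
  have : Pi.mulSingle i (g i) = piZModGen p i ^ (g i).toAdd.val := by
    rw [piZModGen_pow, ZMod.natCast_zmod_val, ofAdd_toAdd]
  exact this ▸ pow_mem (Submonoid.subset_closure (Set.mem_range_self i)) _

theorem augmentationIdeal_le_span_piZModGen [NeZero p] [Fintype ι] (k : Type*) [CommRing k] :
    augmentationIdeal k G ≤ Ideal.span (Set.range fun i => of k G (piZModGen p i) - 1) :=
  augmentationIdeal_le fun g => of_sub_one_mem_of_mem_closure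
    (Set.forall_mem_range.2 fun i => Ideal.subset_span (Set.mem_range_self i))
    (closure_range_piZModGen (ι := ι) p ▸ Submonoid.mem_top g)

variable (ι) (k : Type*) [Field k] [Fact p.Prime] [CharP k p] [Fintype ι]

theorem augmentationIdeal_pow_eq_bot :
    augmentationIdeal k G ^ (Fintype.card ι * (p - 1) + 1) = ⊥ := by
  refine eq_bot_iff.2 ((Ideal.pow_right_mono (augmentationIdeal_le_span_piZModGen p k) _).trans ?_)
  refine (Ideal.span_range_pow_eq_bot fun i => ?_).le
  rw [Nat.sub_add_cancel (Fact.out : p.Prime).one_le, sub_pow_char, one_pow, ← map_pow,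
    pi_zmod_pow_eq_one, map_one, sub_self]

theorem prod_piZModGen_sub_one_pow_pred :
    ∏ i, (of k G (piZModGen p i) - 1) ^ (p - 1) = ∑ g, of k G g := by
  have : NeZero p := ⟨(Fact.out : p.Prime).ne_zero⟩
  simp_rw [sub_one_pow_pred_eq_geom_sum p, ← map_pow, piZModGen_pow]
  rw [Finset.prod_congr rfl fun (i : ι) _ => (ZMod.sum_range_natCast p _).trans
    (Equiv.sum_comp Multiplicative.ofAdd fun a => of k G (Pi.mulSingle i a))]
  exact prod_sum_of_mulSingle k (ι := ι) (M := fun _ => Multiplicative (ZMod p))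

theorem augmentationIdeal_pow_ne_bot :
    augmentationIdeal k G ^ (Fintype.card ι * (p - 1)) ≠ ⊥ := by
  intro h
  have hmem : ∏ i, (of k G (piZModGen p i) - 1) ^ (p - 1) ∈
      augmentationIdeal k G ^ (Fintype.card ι * (p - 1)) := by
    rw [mul_comm, pow_mul, ← card_univ, ← prod_const]
    exact Ideal.prod_mem_prod fun i _ => Ideal.pow_mem_pow (of_sub_one_mem_augmentationIdeal _) _
  rw [h, Ideal.mem_bot, prod_piZModGen_sub_one_pow_pred p ι k] at hmem
  exact sum_of_ne_zero hmem

theorem jacobsonRad_eq_augmentationIdeal :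
    jacobsonRad (MonoidAlgebra k G) = augmentationIdeal k G :=
  jacobsonRad_eq_of_isMaximal_of_isNilpotent (augmentationIdeal_isMaximal k G)
    ⟨_, augmentationIdeal_pow_eq_bot p ι k⟩

theorem nilIndex_monoidAlgebra_pi_zmod :
    nilIndex (MonoidAlgebra k G) = Fintype.card ι * (p - 1) + 1 := by
  apply nilIndex_eq_succ_of_pow_eq_bot <;> rw [jacobsonRad_eq_augmentationIdeal]
  exacts [augmentationIdeal_pow_eq_bot p ι k, augmentationIdeal_pow_ne_bot p ι k]

end ElementaryAbelian

theorem nilIndex_elementaryAbelian_general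
    (p n : ℕ) (hp : p.Prime) (k : Type*) [Field k] [CharP k p]
    (G : Type*) [Group G]
    (hG : Nonempty (G ≃* (Fin n → Multiplicative (ZMod p)))) :
    nilIndex (MonoidAlgebra k G) = n * (p - 1) + 1 := by
  have := Fact.mk hp
  obtain ⟨φ⟩ := hG
  rw [nilIndex_congr (MonoidAlgebra.domCongr k k φ).toRingEquiv, nilIndex_monoidAlgebra_pi_zmod,
    Fintype.card_fin]

/-- For a field k of characteristic p > 0 and an elementary abelian p-group G of
order p^n (i.e. G ≅ (C_p)^n), one has t(G) = n(p-1) + 1. -/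
theorem nilIndex_elementaryAbelian
    (p n : ℕ) (hp : p.Prime) (k : Type*) [Field k] [CharP k p]
    (G : Type*) [Group G] [Fintype G]
    (hG : Nonempty (G ≃* (Fin n → Multiplicative (ZMod p)))) :
    nilIndex (MonoidAlgebra k G) = n * (p - 1) + 1 :=
  nilIndex_elementaryAbelian_general p n hp k G hG
end

section
/- Let p be a prime and let G be a finite p-group of order p^n such that Φ(G) = [G,G] has order p and Z(G) is cyclic of order p^2. Then there exists a subgroup E of G of index p such that G = E·Z(G), E ∩ Z(G) = Φ(G), and E is extraspecial with Φ(E) = Φ(G) (that is, Φ(E) = [E,E] = Z(E) and this common subgroup has order p). -/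
/-!
Since `Φ(G)` has order `p` and every `p`-th power lies in `Φ(G)`, if `z` generates the cyclic
group `Z(G)` of order `p²` then `Φ(G) = ⟨z ^ p⟩ ≤ Z(G)` and `z ∉ Φ(G)`. So some maximal subgroup
`E` misses `z`; then `E · Z(G) = G`, `E` has index `p`, and counting orders in `Z(G)` gives
`E ∩ Z(G) = Φ(G)`. Because `Z(G)` is central and `E · Z(G) = G`, `[E, E] = [G, G]` and
`Z(E) = E ∩ Z(G)`, and both equal `Φ(G)`. Finally `[E, E] ≤ Φ(E) ≤ Φ(G)`, the second inclusion
holding for every normal subgroup.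
-/

open Subgroup
open scoped commutatorElement

theorem mem_frattini_iff {G : Type*} [Group G] {x : G} :
    x ∈ frattini G ↔ ∀ K : Subgroup G, IsCoatom K → x ∈ K := by
  simp only [frattini, Order.radical, mem_iInf, Set.mem_ofPred_eq]

theorem map_subtype_frattini_le {G : Type*} [Group G] [Finite G] (N : Subgroup G) [N.Normal] :
    (frattini N).map N.subtype ≤ frattini G := by
  set F := (frattini N).map N.subtype
  intro x hx
  rw [mem_frattini_iff]
  intro K hK
  by_contra hxK
  have hKF : K ⊔ F = ⊤ := codisjoint_iff.mp (hK.not_le_iff_codisjoint.mp fun h => hxK (h hx))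
  have hFN : F ≤ N := map_subtype_le _
  -- Dedekind's law: `F ≤ N` is normal and `K ⊔ F = ⊤`, so `N = (K ⊓ N) ⊔ F`
  have : K.subgroupOf N ⊔ frattini N = ⊤ := by
    apply map_injective N.subtype_injective
    rw [Subgroup.map_sup, subgroupOf_map_subtype, ← MonoidHom.range_eq_map, range_subtype]
    refine le_antisymm (sup_le inf_le_right hFN) fun n hn => ?_
    obtain ⟨k, hk, f, hf, rfl⟩ := mem_sup_of_normal_right.mp (hKF ▸ mem_top n)
    exact mul_mem_sup ⟨hk, by simpa using N.mul_mem hn (N.inv_mem (hFN hf))⟩ hf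
  exact hxK (subgroupOf_eq_top.mp (frattini_nongenerating this) (hFN hx))

theorem card_inf_mul_index_of_sup_eq_top {G : Type*} [Group G] {H K : Subgroup G} [H.Normal]
    (h : H ⊔ K = ⊤) : Nat.card (H ⊓ K : Subgroup G) * H.index = Nat.card K := by
  rw [← relIndex_top_right, ← h, relIndex_sup_left, ← inf_relIndex_right, ← relIndex_bot_left,
    ← relIndex_bot_left, relIndex_mul_relIndex _ _ _ bot_le inf_le_right]

section CentralProduct

variable {G : Type*} [Group G]

theorem commutatorElement_mul_mem_center {a b z w : G} (hz : z ∈ center G) (hw : w ∈ center G) :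
    ⁅a * z, b * w⁆ = ⁅a, b⁆ := by
  rw [mem_center_iff] at hz hw
  rw [commutatorElement_mul_left_eq_conj_mul, commutatorElement_eq_one_iff_mul_comm.mpr (hz _).symm,
    commutatorElement_mul_right_eq_mul_conj, commutatorElement_eq_one_iff_mul_comm.mpr (hw a)]
  group

theorem map_subtype_commutator_of_sup_center_eq_top {H : Subgroup G} (hH : H ⊔ center G = ⊤) :
    (commutator H).map H.subtype = commutator G := by
  rw [map_subtype_commutator]
  refine le_antisymm (commutator_mono le_top le_top) ?_
  rw [commutator_def, commutator_le]
  intro g _ g' _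
  obtain ⟨a, ha, z, hz, rfl⟩ := mem_sup_of_normal_right.mp (hH ▸ mem_top g)
  obtain ⟨b, hb, w, hw, rfl⟩ := mem_sup_of_normal_right.mp (hH ▸ mem_top g')
  rw [commutatorElement_mul_mem_center hz hw]
  exact commutator_mem_commutator ha hb

theorem map_subtype_center_of_sup_center_eq_top {H : Subgroup G} (hH : H ⊔ center G = ⊤) :
    (center H).map H.subtype = H ⊓ center G := by
  ext x
  simp only [mem_map, mem_inf, mem_center_iff]
  constructor
  · rintro ⟨y, hy, rfl⟩
    refine ⟨y.2, fun g => ?_⟩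
    obtain ⟨a, ha, z, hz, rfl⟩ := mem_sup_of_normal_right.mp (hH ▸ mem_top g)
    rw [mul_assoc, ← mem_center_iff.mp hz, ← mul_assoc, ← mul_assoc]
    exact congrArg (· * z) (congrArg Subtype.val (hy ⟨a, ha⟩))
  · rintro ⟨hxH, hx⟩
    exact ⟨⟨x, hxH⟩, fun g => Subtype.ext (hx g), rfl⟩

end CentralProduct

namespace IsPGroup

variable {p : ℕ} [Fact p.Prime] {P : Type*} [Group P] [Finite P]

theorem normal_of_isCoatom (hP : IsPGroup p P) {K : Subgroup P} (hK : IsCoatom K) : K.Normal :=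
  have := hP.isNilpotent
  Group.normalizerCondition_of_isNilpotent.normal_of_coatom K hK

theorem index_eq_of_isCoatom (hP : IsPGroup p P) {K : Subgroup P} (hK : IsCoatom K) :
    K.index = p := by
  have := hP.normal_of_isCoatom hK
  have : Nontrivial (P ⧸ K) := QuotientGroup.nontrivial_iff.mpr hK.1
  obtain ⟨n, hn, hcard⟩ := (hP.to_quotient K).nontrivial_iff_card.mp this
  obtain ⟨q, hq⟩ := exists_prime_orderOf_dvd_card' p (hcard ▸ dvd_pow_self p hn.ne')
  obtain ⟨g, rfl⟩ := QuotientGroup.mk'_surjective K q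
  have hgK : g ∉ K := by
    rw [← QuotientGroup.eq_one_iff]
    intro h
    simp [h, (Fact.out : p.Prime).ne_one.symm] at hq
  have hcomap : (zpowers (QuotientGroup.mk' K g)).comap (QuotientGroup.mk' K) = ⊤ := by
    refine hK.2 _ (lt_of_le_of_ne (by simpa using ker_le_comap (QuotientGroup.mk' K) _) ?_)
    intro h
    exact hgK (h ▸ mem_zpowers _)
  have htop : zpowers (QuotientGroup.mk' K g) = ⊤ := by
    rw [← map_comap_eq_self_of_surjective (QuotientGroup.mk'_surjective K) (zpowers _), hcomap,
      map_top_of_surjective _ (QuotientGroup.mk'_surjective K)]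
  rw [index_eq_card, ← hq, ← Nat.card_zpowers, htop, card_top]

theorem commutator_le_frattini (hP : IsPGroup p P) : commutator P ≤ frattini P := by
  intro x hx
  rw [mem_frattini_iff]
  intro K hK
  have := hP.normal_of_isCoatom hK
  have := isCyclic_of_prime_card ((index_eq_card K).symm.trans (hP.index_eq_of_isCoatom hK))
  exact Normal.quotient_commutative_iff_commutator_le.mp inferInstance hx

theorem pow_mem_frattini (hP : IsPGroup p P) (g : P) : g ^ p ∈ frattini P := by
  rw [mem_frattini_iff]
  intro K hK
  have := hP.normal_of_isCoatom hK
  rw [← QuotientGroup.eq_one_iff, QuotientGroup.mk_pow, ← hP.index_eq_of_isCoatom hK,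
    index_eq_card]
  exact pow_card_eq_one'

theorem zpowers_pow_eq_frattini (hP : IsPGroup p P) (hΦ : Nat.card (frattini P) = p) {z : P}
    (hz : orderOf z = p ^ 2) : zpowers (z ^ p) = frattini P := by
  have hp : p.Prime := Fact.out
  refine eq_of_le_of_card_ge (zpowers_le.mpr (hP.pow_mem_frattini z)) ?_
  rw [hΦ, Nat.card_zpowers, orderOf_pow_of_dvd hp.ne_zero (hz ▸ dvd_pow_self p two_ne_zero), hz,
    pow_two, Nat.mul_div_cancel _ hp.pos]

theorem frattini_eq_commutator_of_normal (hP : IsPGroup p P) {N : Subgroup P} [N.Normal]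
    (hN : frattini P ≤ (commutator N).map N.subtype) : frattini N = commutator N := by
  refine le_antisymm ?_ (hP.to_subgroup N).commutator_le_frattini
  rw [← map_le_map_iff_of_injective N.subtype_injective]
  exact (map_subtype_frattini_le N).trans hN

theorem exists_isCoatom_inf_center_eq_frattini (hP : IsPGroup p P)
    (hΦ : Nat.card (frattini P) = p) (hZ : IsCyclic (center P))
    (hZcard : Nat.card (center P) = p ^ 2) :
    ∃ E : Subgroup P, IsCoatom E ∧ E ⊔ center P = ⊤ ∧ E ⊓ center P = frattini P := by
  have hp : p.Prime := Fact.out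
  obtain ⟨z, hz⟩ := hZ.exists_generator
  have hzord : orderOf (z : P) = p ^ 2 := by
    rw [orderOf_coe, orderOf_eq_card_of_forall_mem_zpowers hz, hZcard]
  have hzΦ : (z : P) ∉ frattini P := fun h => by
    have := Subgroup.orderOf_dvd_natCard _ h
    rw [hzord, hΦ] at this
    nlinarith [Nat.le_of_dvd hp.pos this, hp.two_le]
  obtain ⟨E, hE, hzE⟩ : ∃ E : Subgroup P, IsCoatom E ∧ (z : P) ∉ E := by
    simpa [mem_frattini_iff] using hzΦ
  have hEZ : E ⊔ center P = ⊤ :=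
    codisjoint_iff.mp (hE.not_le_iff_codisjoint.mp fun h => hzE (h z.2))
  have := hP.normal_of_isCoatom hE
  have hΦZ : frattini P ≤ center P :=
    hP.zpowers_pow_eq_frattini hΦ hzord ▸ zpowers_le.mpr (pow_mem z.2 p)
  refine ⟨E, hE, hEZ, (eq_of_le_of_card_ge (le_inf (frattini_le_coatom hE) hΦZ) ?_).symm⟩
  have := card_inf_mul_index_of_sup_eq_top hEZ
  rw [hP.index_eq_of_isCoatom hE, hZcard, pow_two] at this
  rw [hΦ, Nat.eq_of_mul_eq_mul_right hp.pos this]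

end IsPGroup

/-- If G is a finite p-group of order p^n with Φ(G) = [G,G] of order p and Z(G)
cyclic of order p², then G has a subgroup E of index p with G = E·Z(G),
E ∩ Z(G) = Φ(G), and E extraspecial with Φ(E) = Φ(G). -/
theorem exists_extraspecial_index_p_subgroup
    (p n : ℕ) (hp : p.Prime) (G : Type*) [Group G] [Fintype G]
    (hcard : Fintype.card G = p ^ n)
    (hfc : frattini G = commutator G)
    (hford : Nat.card (frattini G) = p)
    (hzc : IsCyclic (Subgroup.center G))
    (hzcard : Nat.card (Subgroup.center G) = p ^ 2) :
    ∃ E : Subgroup G, E.index = p ∧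
      E ⊔ Subgroup.center G = ⊤ ∧
      E ⊓ Subgroup.center G = frattini G ∧
      frattini ↥E = commutator ↥E ∧
      commutator ↥E = Subgroup.center ↥E ∧
      Nat.card (Subgroup.center ↥E) = p ∧
      (frattini ↥E).map E.subtype = frattini G := by
  have : Fact p.Prime := ⟨hp⟩
  have hG : IsPGroup p G := .of_card (n := n) (by rw [Nat.card_eq_fintype_card, hcard])
  obtain ⟨E, hE, hEZ, hEZΦ⟩ := hG.exists_isCoatom_inf_center_eq_frattini hford hzc hzcard
  have := hG.normal_of_isCoatom hE
  have hEE : (commutator E).map E.subtype = frattini G :=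
    hfc ▸ map_subtype_commutator_of_sup_center_eq_top hEZ
  have hZE : (center E).map E.subtype = frattini G :=
    (map_subtype_center_of_sup_center_eq_top hEZ).trans hEZΦ
  have hΦE : frattini E = commutator E := hG.frattini_eq_commutator_of_normal hEE.ge
  refine ⟨E, hG.index_eq_of_isCoatom hE, hEZ, hEZΦ, hΦE, ?_, ?_, hΦE ▸ hEE⟩
  · exact map_injective E.subtype_injective (hEE.trans hZE.symm)
  · rw [← card_map_of_injective E.subtype_injective, hZE, hford]
end
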